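/- arXiv:1907.09652 — 5 statements merged into one kernel-verified Lean document; each statement's English description precedes it below -/
import Mathlib

section
/- For any convex function f with convex conjugate f*, any two probability densities p, q on Y, and any measurable function T: Y → ℝ, the f-divergence satisfies D_f(p||q) ≥ E_{y~p}[T(y)] − E_{y~q}[f*(T(y))]. -/
open MeasureTheory

/-- Variational lower bound on the f-divergence:
`D_f(p‖q) ≥ E_p[T] - E_q[f*(T)]` for any measurable `T`, where `f*` is the convex
conjugate of the convex function `f` (so `u * t - f u ≤ f* t` for all `u, t`). -/
theorem fdivergence_variational_lower_bound {Y : Type*} [MeasurableSpace Y] (ν : Measure Y)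
    (f fstar : ℝ → ℝ) (hf : ConvexOn ℝ Set.univ f)
    (hfstar : ∀ t u : ℝ, u * t - f u ≤ fstar t)
    (p q : Y → ℝ) (T : Y → ℝ) (hT_meas : Measurable T)
    (hp_nonneg : ∀ y, 0 ≤ p y) (hq_pos : ∀ y, 0 < q y)
    (hp_density : ∫ y, p y ∂ν = 1) (hq_density : ∫ y, q y ∂ν = 1)
    (hint1 : Integrable (fun y => T y * p y) ν)
    (hint2 : Integrable (fun y => fstar (T y) * q y) ν)
    (hint3 : Integrable (fun y => q y * f (p y / q y)) ν) :
    ∫ y, T y * p y ∂ν - ∫ y, fstar (T y) * q y ∂ν ≤ ∫ y, q y * f (p y / q y) ∂ν := by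
  rw [← integral_sub hint1 hint2]
  refine integral_mono (hint1.sub hint2) hint3 fun y => ?_
  have hq := hq_pos y
  have h := hfstar (T y) (p y / q y)
  have := mul_le_mul_of_nonneg_right h hq.le
  rw [sub_mul] at this
  have key : p y / q y * T y * q y = p y * T y := by field_simp
  nlinarith [this, key]
end

section
/- The balanced IPS estimator R̂_bal(h) = (1/n) Σ_{j=1}^J Σ_{i=1}^{n_j} (h(y_i^j|x_i^j)/h_avg(y_i^j|x_i^j)) δ_i^j, where h_avg(y|x) = (Σ_j n_j h_j(y|x))/n, is an unbiased estimator of R(h) = E_{x~P, y~h(·|x)}[δ(x,y)], assuming h_avg > 0 on the support of h. -/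
open MeasureTheory
open scoped ENNReal NNReal

/-- The balanced IPS estimator, using the average logging policy
`h_avg(y|x) = (Σ_j n_j h_j(y|x)) / n`, is unbiased for the risk
`R(h) = E_{x~P, y~h}[δ]`, assuming `h_avg > 0` on the support of `h`. -/
theorem balanced_ips_unbiased {X Y Ω : Type*} [MeasurableSpace X] [MeasurableSpace Y]
    [MeasurableSpace Ω]
    (μ : Measure X) (ν : Measure Y) [SigmaFinite μ] [SigmaFinite ν]
    (μΩ : Measure Ω) [IsProbabilityMeasure μΩ]
    (J : ℕ) (nvec : Fin J → ℕ) (hn : 0 < ∑ j, nvec j)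
    (Z : (j : Fin J) → Fin (nvec j) → Ω → X × Y)
    (Pd : X → ℝ) (h : X → Y → ℝ) (hj : Fin J → X → Y → ℝ) (havg : X → Y → ℝ)
    (δ : X × Y → ℝ) (L : ℝ)
    (havg_def : ∀ x y, havg x y = (∑ j, (nvec j : ℝ) * hj j x y) / (∑ j, (nvec j : ℝ)))
    (hP_nonneg : ∀ x, 0 ≤ Pd x) (hP_density : ∫ x, Pd x ∂μ = 1) (hP_meas : Measurable Pd)
    (hh_nonneg : ∀ x y, 0 ≤ h x y) (hh_density : ∀ x, ∫ y, h x y ∂ν = 1)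
    (hh_meas : Measurable fun z : X × Y => h z.1 z.2)
    (hj_nonneg : ∀ j x y, 0 ≤ hj j x y) (hj_density : ∀ j x, ∫ y, hj j x y ∂ν = 1)
    (hj_meas : ∀ j, Measurable fun z : X × Y => hj j z.1 z.2)
    (hsupp : ∀ x y, 0 < h x y → 0 < havg x y)
    (hδ : ∀ z, δ z ∈ Set.Icc (0 : ℝ) L) (hδ_meas : Measurable δ)
    (hZ_meas : ∀ j i, Measurable (Z j i))
    (hlaw : ∀ j i, Measure.map (Z j i) μΩ
      = (μ.prod ν).withDensity fun z => ENNReal.ofReal (hj j z.1 z.2 * Pd z.1))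
    (hint : ∀ j i, Integrable
      (fun ω => h (Z j i ω).1 (Z j i ω).2 / havg (Z j i ω).1 (Z j i ω).2 * δ (Z j i ω)) μΩ)
    (hR_int : Integrable (fun z : X × Y => δ z * h z.1 z.2 * Pd z.1) (μ.prod ν)) :
    ∫ ω, (1 / (∑ j, (nvec j : ℝ))) *
        ∑ j, ∑ i, h (Z j i ω).1 (Z j i ω).2 / havg (Z j i ω).1 (Z j i ω).2 * δ (Z j i ω) ∂μΩ
      = ∫ z : X × Y, δ z * h z.1 z.2 * Pd z.1 ∂(μ.prod ν) := by
  set n : ℝ := ∑ j, (nvec j : ℝ) with hn_def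
  have hn_pos : (0 : ℝ) < n := by
    rw [hn_def, ← Nat.cast_sum]
    exact_mod_cast hn
  -- the function being averaged
  set f : X × Y → ℝ := fun z => h z.1 z.2 / havg z.1 z.2 * δ z with hf_def
  have havg_meas : Measurable fun z : X × Y => havg z.1 z.2 := by
    have : (fun z : X × Y => havg z.1 z.2)
        = fun z : X × Y => (∑ j, (nvec j : ℝ) * hj j z.1 z.2) / n := by
      funext z; exact havg_def z.1 z.2
    rw [this]
    exact (Finset.measurable_sum _ fun j _ => (hj_meas j).const_mul _).div_const _
  have hf_meas : Measurable f := (hh_meas.div havg_meas).mul hδ_meas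
  -- value of each sample's expectation
  have key : ∀ j i, ∫ ω, f (Z j i ω) ∂μΩ
      = ∫ z, f z * (hj j z.1 z.2 * Pd z.1) ∂(μ.prod ν) := by
    intro j i
    have wj_meas : Measurable fun z : X × Y => hj j z.1 z.2 * Pd z.1 :=
      (hj_meas j).mul (hP_meas.comp measurable_fst)
    rw [← integral_map (hZ_meas j i).aemeasurable hf_meas.aestronglyMeasurable, hlaw j i]
    have : (fun z : X × Y => ENNReal.ofReal (hj j z.1 z.2 * Pd z.1))
        = fun z : X × Y => ((fun z : X × Y => (hj j z.1 z.2 * Pd z.1).toNNReal) z : ℝ≥0∞) := rfl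
    rw [this, integral_withDensity_eq_integral_smul (wj_meas.real_toNNReal) f]
    congr 1; funext z
    rw [NNReal.smul_def, Real.coe_toNNReal _ (mul_nonneg (hj_nonneg j _ _) (hP_nonneg _)),
      smul_eq_mul]
    ring
  -- push integral inside
  rw [integral_const_mul, integral_finset_sum _ fun j _ =>
    integrable_finset_sum _ fun i _ => hint j i]
  have step : ∀ j, (∫ ω, ∑ i,
        h (Z j i ω).1 (Z j i ω).2 / havg (Z j i ω).1 (Z j i ω).2 * δ (Z j i ω) ∂μΩ)
      = ∫ z, (nvec j : ℝ) * (f z * (hj j z.1 z.2 * Pd z.1)) ∂(μ.prod ν) := by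
    intro j
    rw [integral_finset_sum _ fun i _ => hint j i]
    have : ∑ i, ∫ ω, f (Z j i ω) ∂μΩ
        = ∫ z, (nvec j : ℝ) * (f z * (hj j z.1 z.2 * Pd z.1)) ∂(μ.prod ν) := by
      rw [Finset.sum_congr rfl fun i _ => key j i, Finset.sum_const, Finset.card_univ,
        Fintype.card_fin, nsmul_eq_mul, ← integral_const_mul]
    exact this
  rw [Finset.sum_congr rfl fun j _ => step j]
  -- integrability of each term
  have hint' : ∀ j, Integrable
      (fun z : X × Y => (nvec j : ℝ) * (f z * (hj j z.1 z.2 * Pd z.1))) (μ.prod ν) := by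
    intro j
    rcases Nat.eq_zero_or_pos (nvec j) with h0 | hpos
    · simp [h0]
    · have i : Fin (nvec j) := ⟨0, hpos⟩
      have h1 : Integrable f (Measure.map (Z j i) μΩ) := by
        rw [integrable_map_measure hf_meas.aestronglyMeasurable (hZ_meas j i).aemeasurable]
        exact hint j i
      rw [hlaw j i] at h1
      have wj_meas : Measurable fun z : X × Y => ENNReal.ofReal (hj j z.1 z.2 * Pd z.1) :=
        ((hj_meas j).mul (hP_meas.comp measurable_fst)).ennreal_ofReal
      rw [integrable_withDensity_iff wj_meas
        (Filter.Eventually.of_forall fun z => ENNReal.ofReal_lt_top)] at h1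
      have h2 : (fun z : X × Y => f z * (ENNReal.ofReal (hj j z.1 z.2 * Pd z.1)).toReal)
          = fun z => f z * (hj j z.1 z.2 * Pd z.1) := by
        funext z
        rw [ENNReal.toReal_ofReal (mul_nonneg (hj_nonneg j _ _) (hP_nonneg _))]
      rw [h2] at h1
      exact h1.const_mul _
  rw [← integral_finset_sum _ fun j _ => hint' j]
  -- pointwise identity
  have point : ∀ z : X × Y, ∑ j, (nvec j : ℝ) * (f z * (hj j z.1 z.2 * Pd z.1))
      = n * (δ z * h z.1 z.2 * Pd z.1) := by
    intro z
    have hsum : ∑ j, (nvec j : ℝ) * hj j z.1 z.2 = n * havg z.1 z.2 := by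
      rw [havg_def z.1 z.2]; field_simp
    have : ∑ j, (nvec j : ℝ) * (f z * (hj j z.1 z.2 * Pd z.1))
        = f z * Pd z.1 * ∑ j, (nvec j : ℝ) * hj j z.1 z.2 := by
      rw [Finset.mul_sum]; congr 1; funext j; ring
    rw [this, hsum, hf_def]
    rcases eq_or_lt_of_le (hh_nonneg z.1 z.2) with hz | hz
    · simp [← hz]
    · have hav := hsupp z.1 z.2 hz
      field_simp
  simp only [point]
  rw [integral_const_mul, ← mul_assoc, one_div, inv_mul_cancel₀ (ne_of_gt hn_pos), one_mul]
end

section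
/- Under the assumptions of multi-logger bandit data with δ ∈ [0, L] and d_∞(h||h_j) ≤ M_j for all j, setting M_λ = max_j λ_j M_j, for any η > 0, with probability at least 1 − η: R(h) ≤ R̂_λ(h) + (2 L M_λ log(1/η))/3 + L √(2 Σ_{j=1}^J n_j λ_j^2 d_2(h||h_j; P) log(1/η)). -/
/-!
The estimator is a sum of independent terms `λ_j (h/h_j) δ (Z_{j,i})` with values in
`[0, L M_λ]`. Importance weighting makes their means add up to `R(h)` and bounds their variances
by `λ_j² L² d₂(h‖h_j; P)`. Bernstein's inequality for the lower tail of a sum `S` of independent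
terms in `[0, b]` with total variance at most `V`, `P(E S - S > 2bu/3 + √(2Vu)) ≤ e^{-u}`, then
gives the bound with `u = log(1/η)`.
-/

open MeasureTheory ProbabilityTheory

lemma Nat.two_mul_three_pow_le_factorial_add_two (n : ℕ) : 2 * 3 ^ n ≤ (n + 2).factorial := by
  induction n with
  | zero => simp [Nat.factorial]
  | succ n ih =>
    rw [Nat.factorial_succ, pow_succ]
    nlinarith

namespace Real

lemma exp_le_one_add_add_sq_div_of_nonneg {x : ℝ} (hx0 : 0 ≤ x) (hx3 : x < 3) :
    exp x ≤ 1 + x + x ^ 2 / (2 * (1 - x / 3)) := by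
  have hr0 : 0 ≤ x / 3 := by positivity
  have hr1 : x / 3 < 1 := by linarith
  have hsum := summable_pow_div_factorial x
  have hterm (n : ℕ) : x ^ (n + 2) / (n + 2).factorial ≤ x ^ 2 / 2 * (x / 3) ^ n := by
    have : (2 * 3 ^ n : ℝ) ≤ (n + 2).factorial := by
      exact_mod_cast Nat.two_mul_three_pow_le_factorial_add_two n
    calc x ^ (n + 2) / (n + 2).factorial ≤ x ^ (n + 2) / (2 * 3 ^ n) := by gcongr
      _ = x ^ 2 / 2 * (x / 3) ^ n := by rw [div_pow]; field_simp; ring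
  have htail : ∑' n : ℕ, x ^ (n + 2) / (n + 2).factorial ≤ x ^ 2 / 2 * (1 - x / 3)⁻¹ := by
    rw [← tsum_geometric_of_lt_one hr0 hr1, ← tsum_mul_left]
    exact ((summable_nat_add_iff 2).2 hsum).tsum_le_tsum hterm
      ((summable_geometric_of_lt_one hr0 hr1).mul_left _)
  have hexp : exp x = ∑' n : ℕ, x ^ n / n.factorial := by
    rw [exp_eq_exp_ℝ, NormedSpace.exp_eq_tsum_div]
  rw [hexp, ← hsum.sum_add_tsum_nat_add 2]
  simp only [Finset.sum_range_succ, Finset.sum_range_zero]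
  field_simp at htail ⊢
  norm_num
  linarith

lemma exp_le_one_add_add_sq_div_two_of_nonpos {x : ℝ} (hx : x ≤ 0) :
    exp x ≤ 1 + x + x ^ 2 / 2 := by
  have hcubic : 1 - x + x ^ 2 / 2 - x ^ 3 / 6 ≤ exp (-x) := by
    have := sum_le_exp_of_nonneg (neg_nonneg.2 hx) 4
    norm_num [Finset.sum_range_succ, Nat.factorial] at this
    linarith
  have hq : 0 < 1 + x + x ^ 2 / 2 := by nlinarith [sq_nonneg (x + 1)]
  rw [← mul_le_mul_iff_left₀ (exp_pos (-x)), ← exp_add, add_neg_cancel, exp_zero]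
  nlinarith [mul_le_mul_of_nonneg_left hcubic hq.le, pow_nonneg (neg_nonneg.2 hx) 3,
    pow_nonneg (neg_nonneg.2 hx) 5, pow_two_nonneg (x ^ 2)]

lemma exp_le_one_add_add_sq_div {x c : ℝ} (hxc : x ≤ c) (hc0 : 0 ≤ c) (hc3 : c < 3) :
    exp x ≤ 1 + x + x ^ 2 / (2 * (1 - c / 3)) := by
  rcases le_or_gt x 0 with hx | hx
  · calc exp x ≤ 1 + x + x ^ 2 / 2 := exp_le_one_add_add_sq_div_two_of_nonpos hx
      _ ≤ 1 + x + x ^ 2 / (2 * (1 - c / 3)) := by gcongr <;> linarith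
  · calc exp x ≤ 1 + x + x ^ 2 / (2 * (1 - x / 3)) :=
          exp_le_one_add_add_sq_div_of_nonneg hx.le (hxc.trans_lt hc3)
      _ ≤ 1 + x + x ^ 2 / (2 * (1 - c / 3)) := by
        gcongr
        linarith

end Real

namespace MeasureTheory

lemma ofReal_one_sub_le_prob_compl {α : Type*} [MeasurableSpace α] {μ : Measure α}
    [IsProbabilityMeasure μ] {s : Set α} {η : ℝ} (hη : 0 ≤ η) (hs : μ s ≤ ENNReal.ofReal η) :
    ENNReal.ofReal (1 - η) ≤ μ sᶜ := by
  rw [ENNReal.ofReal_sub _ hη, ENNReal.ofReal_one, tsub_le_iff_left]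
  calc 1 = μ Set.univ := measure_univ.symm
    _ ≤ μ s + μ sᶜ := measure_univ_le_add_compl s
    _ ≤ ENNReal.ofReal η + μ sᶜ := by gcongr

lemma integral_comp_eq_integral_mul_of_map_eq_withDensity {Ω α : Type*} [MeasurableSpace Ω]
    [MeasurableSpace α] {μ : Measure Ω} {ρ : Measure α} {Z : Ω → α} (hZ : AEMeasurable Z μ)
    {q : α → ℝ} (hq : Measurable q) (hq0 : ∀ z, 0 ≤ q z)
    (hlaw : μ.map Z = ρ.withDensity fun z => ENNReal.ofReal (q z))
    {f : α → ℝ} (hf : Measurable f) :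
    ∫ ω, f (Z ω) ∂μ = ∫ z, q z * f z ∂ρ := by
  rw [← integral_map hZ hf.aestronglyMeasurable, hlaw,
    integral_withDensity_eq_integral_toReal_smul (by fun_prop)
      (ae_of_all _ fun _ => ENNReal.ofReal_lt_top)]
  simp [ENNReal.toReal_ofReal (hq0 _)]

end MeasureTheory

namespace ProbabilityTheory

open Real

variable {Ω ι : Type*} [MeasurableSpace Ω] {μ : Measure Ω} [IsProbabilityMeasure μ]

lemma mgf_le_exp_of_le {Y : Ω → ℝ} (hY : MemLp Y 2 μ) (hmean : μ[Y] = 0) {b t : ℝ}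
    (hb : 0 ≤ b) (hYb : ∀ ω, Y ω ≤ b) (ht : 0 ≤ t) (htb : t * b < 3) :
    mgf Y μ t ≤ exp (t ^ 2 * μ[Y ^ 2] / (2 * (1 - t * b / 3))) := by
  set K := 2 * (1 - t * b / 3)
  have hint := hY.integrable one_le_two
  have hint2 : Integrable (Y ^ 2) μ := hY.integrable_sq
  have hquad (ω : Ω) : exp (t * Y ω) ≤ 1 + (t * Y ω + t ^ 2 / K * (Y ^ 2) ω) := by
    have := exp_le_one_add_add_sq_div (mul_le_mul_of_nonneg_left (hYb ω) ht)
      (mul_nonneg ht hb) htb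
    simp only [Pi.pow_apply]
    linarith [show (t * Y ω) ^ 2 / K = t ^ 2 / K * Y ω ^ 2 by ring]
  have hmoment :
      ∫ ω, 1 + (t * Y ω + t ^ 2 / K * (Y ^ 2) ω) ∂μ = 1 + t ^ 2 * μ[Y ^ 2] / K := by
    rw [integral_add (integrable_const 1) ?_, integral_add ?_ ?_, integral_const_mul,
      integral_const_mul, hmean]
    · simp only [integral_const, probReal_univ, smul_eq_mul]
      ring
    all_goals fun_prop
  calc mgf Y μ t ≤ ∫ ω, 1 + (t * Y ω + t ^ 2 / K * (Y ^ 2) ω) ∂μ :=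
        integral_mono (integrable_exp_mul_of_le t b ht hY.aemeasurable (ae_of_all _ hYb))
          ((integrable_const 1).add ((hint.const_mul t).add (hint2.const_mul _))) hquad
    _ = 1 + t ^ 2 * μ[Y ^ 2] / K := hmoment
    _ ≤ exp (t ^ 2 * μ[Y ^ 2] / K) := by linarith [add_one_le_exp (t ^ 2 * μ[Y ^ 2] / K)]

lemma mgf_sum_le_exp_of_iIndepFun [Fintype ι] {Y : ι → Ω → ℝ} (hind : iIndepFun Y μ)
    (hY : ∀ i, MemLp (Y i) 2 μ) (hmean : ∀ i, μ[Y i] = 0) {b V t : ℝ} (hb : 0 ≤ b)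
    (hYb : ∀ i ω, Y i ω ≤ b) (hV : ∑ i, μ[Y i ^ 2] ≤ V) (ht : 0 ≤ t) (htb : t * b < 3) :
    mgf (∑ i, Y i) μ t ≤ exp (t ^ 2 * V / (2 * (1 - t * b / 3))) := by
  rw [hind.mgf_sum₀ (fun i => (hY i).aemeasurable)]
  calc ∏ i, mgf (Y i) μ t ≤ ∏ i, exp (t ^ 2 * μ[Y i ^ 2] / (2 * (1 - t * b / 3))) :=
        Finset.prod_le_prod (fun i _ => mgf_nonneg)
          fun i _ => mgf_le_exp_of_le (hY i) (hmean i) hb (hYb i) ht htb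
    _ = exp (t ^ 2 * (∑ i, μ[Y i ^ 2]) / (2 * (1 - t * b / 3))) := by
        rw [← exp_sum, Finset.mul_sum, Finset.sum_div]
    _ ≤ exp (t ^ 2 * V / (2 * (1 - t * b / 3))) := by
        gcongr
        linarith

lemma measure_sum_ge_le_of_iIndepFun_of_le [Fintype ι] {Y : ι → Ω → ℝ} (hind : iIndepFun Y μ)
    (hY : ∀ i, MemLp (Y i) 2 μ) (hmean : ∀ i, μ[Y i] = 0) {b V t : ℝ} (hb : 0 ≤ b)
    (hYb : ∀ i ω, Y i ω ≤ b) (hV : ∑ i, μ[Y i ^ 2] ≤ V) (ht : 0 ≤ t) (htb : t * b < 3)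
    (ε : ℝ) :
    μ {ω | ε ≤ ∑ i, Y i ω} ≤
      ENNReal.ofReal (exp (-t * ε + t ^ 2 * V / (2 * (1 - t * b / 3)))) := by
  have hS : AEMeasurable (∑ i, Y i) μ :=
    Finset.aemeasurable_sum _ fun i _ => (hY i).aemeasurable
  have hSb (ω : Ω) : (∑ i, Y i) ω ≤ Fintype.card ι * b := by
    simpa [Finset.sum_apply] using Finset.sum_le_sum fun i (_ : i ∈ Finset.univ) => hYb i ω
  calc μ {ω | ε ≤ ∑ i, Y i ω} = μ {ω | ε ≤ (∑ i, Y i) ω} := by simp only [Finset.sum_apply]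
    _ = ENNReal.ofReal (μ.real {ω | ε ≤ (∑ i, Y i) ω}) := (ofReal_measureReal).symm
    _ ≤ ENNReal.ofReal (exp (-t * ε) * mgf (∑ i, Y i) μ t) := by
        gcongr
        exact measure_ge_le_exp_mul_mgf ε ht
          (integrable_exp_mul_of_le t _ ht hS (ae_of_all _ hSb))
    _ ≤ ENNReal.ofReal (exp (-t * ε) * exp (t ^ 2 * V / (2 * (1 - t * b / 3)))) := by
        gcongr
        exact mgf_sum_le_exp_of_iIndepFun hind hY hmean hb hYb hV ht htb
    _ = ENNReal.ofReal (exp (-t * ε + t ^ 2 * V / (2 * (1 - t * b / 3)))) := by rw [exp_add]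

theorem bernstein_inequality [Fintype ι] {Y : ι → Ω → ℝ} (hind : iIndepFun Y μ)
    (hY : ∀ i, MemLp (Y i) 2 μ) (hmean : ∀ i, μ[Y i] = 0) {b V u : ℝ} (hb : 0 ≤ b)
    (hYb : ∀ i ω, Y i ω ≤ b) (hV : ∑ i, μ[Y i ^ 2] ≤ V) :
    μ {ω | 2 * b * u / 3 + √(2 * V * u) < ∑ i, Y i ω} ≤ ENNReal.ofReal (exp (-u)) := by
  rcases le_or_gt u 0 with hu | hu
  · exact prob_le_one.trans (ENNReal.one_le_ofReal.2 (one_le_exp (by linarith)))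
  rcases hb.eq_or_lt with rfl | hb
  · have hempty : {ω | 2 * 0 * u / 3 + √(2 * V * u) < ∑ i, Y i ω} = ∅ := by
      refine Set.eq_empty_of_forall_notMem fun ω hω => ?_
      rw [Set.mem_ofPred_eq] at hω
      have := Finset.sum_nonpos fun i (_ : i ∈ Finset.univ) => hYb i ω
      linarith [sqrt_nonneg (2 * V * u)]
    rw [hempty, measure_empty]
    exact zero_le
  set ε := 2 * b * u / 3 + √(2 * V * u) with hε
  have hV0 : 0 ≤ V :=
    (Finset.sum_nonneg fun i _ => integral_nonneg fun ω => sq_nonneg (Y i ω)).trans hV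
  have hsqrt : √(2 * V * u) ^ 2 = 2 * V * u := sq_sqrt (by positivity)
  have hεpos : 0 < ε := by positivity
  have hεu : 2 * u * (V + b * ε / 3) ≤ ε ^ 2 := by
    rw [hε]
    nlinarith [sqrt_nonneg (2 * V * u), mul_pos hb hu]
  -- The usual choice `t = ε / (V + b ε / 3)` reaches `t b = 3` when `V = 0`; this `t` gives
  -- the same exponent `-ε² / (2 (V + b ε / 3))` and keeps `t b ≤ 3 / 2`.
  set t := ε / (V + 2 * b * ε / 3) with ht
  have hD : 0 < V + 2 * b * ε / 3 := by positivity
  have htb : t * b / 3 ≤ 1 / 2 := by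
    rw [ht, div_mul_eq_mul_div, div_div, div_le_iff₀ (by positivity)]
    linarith
  have hexponent :
      -t * ε + t ^ 2 * V / (2 * (1 - t * b / 3)) = -(ε ^ 2 / (2 * (V + b * ε / 3))) := by
    have h1 : 1 - t * b / 3 = (V + b * ε / 3) / (V + 2 * b * ε / 3) := by
      rw [ht]; field_simp; ring
    rw [h1, ht]
    field_simp
    ring
  calc μ {ω | ε < ∑ i, Y i ω} ≤ μ {ω | ε ≤ ∑ i, Y i ω} :=
        measure_mono (Set.ofPred_subset_ofPred.2 fun _ => le_of_lt)
    _ ≤ ENNReal.ofReal (exp (-t * ε + t ^ 2 * V / (2 * (1 - t * b / 3)))) :=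
        measure_sum_ge_le_of_iIndepFun_of_le hind hY hmean hb.le hYb hV (by positivity)
          (by linarith) ε
    _ ≤ ENNReal.ofReal (exp (-u)) := by
        rw [hexponent]
        gcongr
        rw [le_div_iff₀ (by positivity)]
        linarith

theorem bernstein_inequality_of_mem_Icc [Fintype ι] {X : ι → Ω → ℝ} (hind : iIndepFun X μ)
    (hX_meas : ∀ i, AEStronglyMeasurable (X i) μ) {b V u : ℝ} (hb : 0 ≤ b)
    (hX : ∀ i ω, X i ω ∈ Set.Icc 0 b) (hV : ∑ i, Var[X i; μ] ≤ V) :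
    μ {ω | 2 * b * u / 3 + √(2 * V * u) < ∑ i, (μ[X i] - X i ω)} ≤
      ENNReal.ofReal (exp (-u)) := by
  have hmem (i : ι) : MemLp (X i) 2 μ := MemLp.of_bound (hX_meas i) b <| ae_of_all _ fun ω => by
    rw [Real.norm_of_nonneg (hX i ω).1]
    exact (hX i ω).2
  have hind' := hind.comp (fun i y => μ[X i] - y) fun _ => measurable_const.sub measurable_id
  simp only [Function.comp_def] at hind'
  refine bernstein_inequality hind' (fun i => (memLp_const _).sub (hmem i)) (fun i => ?_) hb
    (fun i ω => ?_) (hV.trans_eq' ?_)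
  · simp [integral_sub (integrable_const _) ((hmem i).integrable one_le_two)]
  · have : μ[X i] ≤ b := by
      simpa using integral_mono ((hmem i).integrable one_le_two) (integrable_const b)
        fun ω => (hX i ω).2
    linarith [(hX i ω).1]
  · refine Finset.sum_congr rfl fun i _ => ?_
    rw [variance_eq_integral (hX_meas i).aemeasurable]
    exact integral_congr_ae (ae_of_all _ fun ω => by simp only [Pi.pow_apply]; ring)

end ProbabilityTheory

section InversePropensityScoring

variable {X Y Ω : Type*} [MeasurableSpace X] [MeasurableSpace Y] [MeasurableSpace Ω]
  {μ : Measure X} {ν : Measure Y} {μΩ : Measure Ω} {Pd : X → ℝ} {h h' : X → Y → ℝ}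
  {δ : X × Y → ℝ} {L : ℝ}

lemma integral_ips_term {Z : Ω → X × Y} (hZ : Measurable Z)
    (hlaw : μΩ.map Z = (μ.prod ν).withDensity fun z => ENNReal.ofReal (h' z.1 z.2 * Pd z.1))
    (hP_meas : Measurable Pd) (hP_nonneg : ∀ x, 0 ≤ Pd x) (hh'_pos : ∀ x y, 0 < h' x y)
    (hh'_meas : Measurable fun z : X × Y => h' z.1 z.2)
    (hh_meas : Measurable fun z : X × Y => h z.1 z.2) (hδ_meas : Measurable δ) :
    ∫ ω, h (Z ω).1 (Z ω).2 / h' (Z ω).1 (Z ω).2 * δ (Z ω) ∂μΩ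
      = ∫ z, δ z * h z.1 z.2 * Pd z.1 ∂(μ.prod ν) := by
  rw [integral_comp_eq_integral_mul_of_map_eq_withDensity hZ.aemeasurable (by fun_prop)
    (fun z => mul_nonneg (hh'_pos _ _).le (hP_nonneg _)) hlaw
    (f := fun z => h z.1 z.2 / h' z.1 z.2 * δ z) (by fun_prop)]
  refine integral_congr_ae (ae_of_all _ fun z => ?_)
  have := (hh'_pos z.1 z.2).ne'
  field_simp

lemma integral_ips_term_sq_le {Z : Ω → X × Y} (hZ : Measurable Z)
    (hlaw : μΩ.map Z = (μ.prod ν).withDensity fun z => ENNReal.ofReal (h' z.1 z.2 * Pd z.1))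
    (hP_meas : Measurable Pd) (hP_nonneg : ∀ x, 0 ≤ Pd x) (hh'_pos : ∀ x y, 0 < h' x y)
    (hh'_meas : Measurable fun z : X × Y => h' z.1 z.2)
    (hh_meas : Measurable fun z : X × Y => h z.1 z.2) (hδ_meas : Measurable δ)
    (hδ : ∀ z, δ z ∈ Set.Icc 0 L)
    (hd₂ : Integrable (fun z : X × Y => h z.1 z.2 ^ 2 / h' z.1 z.2 * Pd z.1) (μ.prod ν)) :
    ∫ ω, (h (Z ω).1 (Z ω).2 / h' (Z ω).1 (Z ω).2 * δ (Z ω)) ^ 2 ∂μΩ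
      ≤ L ^ 2 * ∫ z, h z.1 z.2 ^ 2 / h' z.1 z.2 * Pd z.1 ∂(μ.prod ν) := by
  rw [integral_comp_eq_integral_mul_of_map_eq_withDensity hZ.aemeasurable (by fun_prop)
    (fun z => mul_nonneg (hh'_pos _ _).le (hP_nonneg _)) hlaw
    (f := fun z => (h z.1 z.2 / h' z.1 z.2 * δ z) ^ 2) (by fun_prop), ← integral_const_mul]
  refine integral_mono_of_nonneg (ae_of_all _ fun z => ?_) (hd₂.const_mul _)
    (ae_of_all _ fun z => ?_)
  · exact mul_nonneg (mul_nonneg (hh'_pos _ _).le (hP_nonneg _)) (sq_nonneg _)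
  · have hpos := hh'_pos z.1 z.2
    calc h' z.1 z.2 * Pd z.1 * (h z.1 z.2 / h' z.1 z.2 * δ z) ^ 2
        = δ z ^ 2 * (h z.1 z.2 ^ 2 / h' z.1 z.2 * Pd z.1) := by field_simp
      _ ≤ L ^ 2 * (h z.1 z.2 ^ 2 / h' z.1 z.2 * Pd z.1) := by
        have := hP_nonneg z.1
        gcongr
        · exact (hδ z).1
        · exact (hδ z).2

theorem measure_lt_sub_weighted_ips_sum_le {κ : Type*} [Fintype κ] [IsProbabilityMeasure μΩ]
    {c : κ → ℝ} {H : κ → X → Y → ℝ} {Z : κ → Ω → X × Y} {B u : ℝ}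
    (hc : ∀ k, 0 ≤ c k) (hL : 0 ≤ L) (hB : 0 ≤ B)
    (hP_meas : Measurable Pd) (hP_nonneg : ∀ x, 0 ≤ Pd x) (hh_nonneg : ∀ x y, 0 ≤ h x y)
    (hh_meas : Measurable fun z : X × Y => h z.1 z.2) (hH_pos : ∀ k x y, 0 < H k x y)
    (hH_meas : ∀ k, Measurable fun z : X × Y => H k z.1 z.2)
    (hδ : ∀ z, δ z ∈ Set.Icc 0 L) (hδ_meas : Measurable δ)
    (hB_le : ∀ k x y, c k * (h x y / H k x y) ≤ B) (hZ_meas : ∀ k, Measurable (Z k))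
    (hlaw : ∀ k, μΩ.map (Z k)
      = (μ.prod ν).withDensity fun z => ENNReal.ofReal (H k z.1 z.2 * Pd z.1))
    (hind : iIndepFun Z μΩ)
    (hd₂ : ∀ k, Integrable (fun z : X × Y => h z.1 z.2 ^ 2 / H k z.1 z.2 * Pd z.1) (μ.prod ν)) :
    μΩ {ω | 2 * (L * B) * u / 3 + L * √(2 * (∑ k, c k ^ 2 *
          ∫ z, h z.1 z.2 ^ 2 / H k z.1 z.2 * Pd z.1 ∂(μ.prod ν)) * u)
        < (∑ k, c k) * (∫ z, δ z * h z.1 z.2 * Pd z.1 ∂(μ.prod ν))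
          - ∑ k, c k * (h (Z k ω).1 (Z k ω).2 / H k (Z k ω).1 (Z k ω).2 * δ (Z k ω))}
      ≤ ENNReal.ofReal (Real.exp (-u)) := by
  set R := ∫ z, δ z * h z.1 z.2 * Pd z.1 ∂(μ.prod ν)
  set d₂ := fun k => ∫ z, h z.1 z.2 ^ 2 / H k z.1 z.2 * Pd z.1 ∂(μ.prod ν)
  let T : κ → Ω → ℝ := fun k ω => h (Z k ω).1 (Z k ω).2 / H k (Z k ω).1 (Z k ω).2 * δ (Z k ω)
  have hT_meas (k : κ) : Measurable (T k) :=
    ((hh_meas.div (hH_meas k)).mul hδ_meas).comp (hZ_meas k)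
  have hT_mem (k : κ) (ω : Ω) : c k * T k ω ∈ Set.Icc 0 (L * B) := by
    obtain ⟨hδ0, hδL⟩ := hδ (Z k ω)
    have hw := div_nonneg (hh_nonneg (Z k ω).1 (Z k ω).2) (hH_pos k (Z k ω).1 (Z k ω).2).le
    refine ⟨mul_nonneg (hc k) (mul_nonneg hw hδ0), ?_⟩
    nlinarith [mul_le_mul_of_nonneg_right (hB_le k (Z k ω).1 (Z k ω).2) hδ0,
      mul_le_mul_of_nonneg_left hδL hB]
  have hT_mean (k : κ) : μΩ[fun ω => c k * T k ω] = c k * R := by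
    rw [integral_const_mul, integral_ips_term (hZ_meas k) (hlaw k) hP_meas hP_nonneg (hH_pos k)
      (hH_meas k) hh_meas hδ_meas]
  have hT_var (k : κ) : Var[fun ω => c k * T k ω; μΩ] ≤ c k ^ 2 * (L ^ 2 * d₂ k) := by
    rw [variance_const_mul]
    gcongr
    exact (variance_le_expectation_sq (hT_meas k).aestronglyMeasurable).trans
      (integral_ips_term_sq_le (hZ_meas k) (hlaw k) hP_meas hP_nonneg (hH_pos k) (hH_meas k)
        hh_meas hδ_meas hδ (hd₂ k))
  have hind' := hind.comp (fun k z => c k * (h z.1 z.2 / H k z.1 z.2 * δ z)) fun k =>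
    ((hh_meas.div (hH_meas k)).mul hδ_meas).const_mul _
  simp only [Function.comp_def] at hind'
  have hsqrt : √(2 * (L ^ 2 * ∑ k, c k ^ 2 * d₂ k) * u)
      = L * √(2 * (∑ k, c k ^ 2 * d₂ k) * u) := by
    rw [show 2 * (L ^ 2 * ∑ k, c k ^ 2 * d₂ k) * u = L ^ 2 * (2 * (∑ k, c k ^ 2 * d₂ k) * u) by
      ring, Real.sqrt_mul (sq_nonneg L), Real.sqrt_sq hL]
  refine (measure_mono fun ω hω => ?_).trans (bernstein_inequality_of_mem_Icc
    (X := fun k ω => c k * T k ω) hind' (fun k => ((hT_meas k).const_mul _).aestronglyMeasurable)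
    (mul_nonneg hL hB) hT_mem (V := L ^ 2 * ∑ k, c k ^ 2 * d₂ k)
    ((Finset.sum_le_sum fun k _ => hT_var k).trans_eq ?_))
  · simp only [Set.mem_ofPred_eq, hT_mean, Finset.sum_sub_distrib, ← Finset.sum_mul,
      hsqrt] at hω ⊢
    exact hω
  · rw [Finset.mul_sum]
    exact Finset.sum_congr rfl fun k _ => by ring

end InversePropensityScoring

theorem lambda_weighted_generalization_bound_general {X Y Ω : Type*} [MeasurableSpace X]
    [MeasurableSpace Y] [MeasurableSpace Ω]
    (μ : Measure X) (ν : Measure Y)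
    (μΩ : Measure Ω) [IsProbabilityMeasure μΩ]
    (J : ℕ) (nvec : Fin J → ℕ)
    (lam : Fin J → ℝ) (hlam_nonneg : ∀ j, 0 ≤ lam j)
    (hlam_sum : ∑ j, lam j * (nvec j : ℝ) = 1)
    (Z : (j : Fin J) → Fin (nvec j) → Ω → X × Y)
    (Pd : X → ℝ) (h : X → Y → ℝ) (hj : Fin J → X → Y → ℝ) (δ : X × Y → ℝ)
    (L : ℝ) (M : Fin J → ℝ) (Mlam : ℝ) (η : ℝ) (hη : 0 < η)
    (hP_nonneg : ∀ x, 0 ≤ Pd x) (hP_meas : Measurable Pd)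
    (hh_nonneg : ∀ x y, 0 ≤ h x y)
    (hh_meas : Measurable fun z : X × Y => h z.1 z.2)
    (hj_pos : ∀ j x y, 0 < hj j x y)
    (hj_meas : ∀ j, Measurable fun z : X × Y => hj j z.1 z.2)
    (hδ : ∀ z, δ z ∈ Set.Icc (0 : ℝ) L) (hδ_meas : Measurable δ)
    (hM : ∀ j x y, h x y / hj j x y ≤ M j)
    (hMlam : ∀ j, lam j * M j ≤ Mlam)
    (hZ_meas : ∀ j i, Measurable (Z j i))
    (hlaw : ∀ j i, Measure.map (Z j i) μΩ
      = (μ.prod ν).withDensity fun z => ENNReal.ofReal (hj j z.1 z.2 * Pd z.1))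
    (hind : iIndepFun
      (fun p : (j : Fin J) × Fin (nvec j) => Z p.1 p.2) μΩ)
    (hd2_int : ∀ j, Integrable
      (fun z : X × Y => (h z.1 z.2) ^ 2 / hj j z.1 z.2 * Pd z.1) (μ.prod ν)) :
    μΩ {ω | ∫ z : X × Y, δ z * h z.1 z.2 * Pd z.1 ∂(μ.prod ν)
        ≤ (∑ j, lam j *
            ∑ i, h (Z j i ω).1 (Z j i ω).2 / hj j (Z j i ω).1 (Z j i ω).2 * δ (Z j i ω))
          + 2 * L * Mlam * Real.log (1 / η) / 3
          + L * Real.sqrt (2 * (∑ j, (nvec j : ℝ) * (lam j) ^ 2 *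
              ∫ z : X × Y, (h z.1 z.2) ^ 2 / hj j z.1 z.2 * Pd z.1 ∂(μ.prod ν))
              * Real.log (1 / η))}
      ≥ ENNReal.ofReal (1 - η) := by
  obtain ⟨j, -, hj0⟩ := Finset.exists_ne_zero_of_sum_ne_zero (hlam_sum.trans_ne one_ne_zero)
  obtain ⟨ω₀⟩ := nonempty_of_isProbabilityMeasure μΩ
  set z₀ := Z j ⟨0, Nat.pos_of_ne_zero fun h0 => hj0 (by simp [h0])⟩ ω₀
  have hL : 0 ≤ L := (hδ z₀).1.trans (hδ z₀).2
  have hMlam_nonneg : 0 ≤ Mlam := (mul_nonneg (hlam_nonneg j)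
    ((div_nonneg (hh_nonneg z₀.1 z₀.2) (hj_pos j z₀.1 z₀.2).le).trans (hM j _ _))).trans (hMlam j)
  have htail := measure_lt_sub_weighted_ips_sum_le (κ := (j : Fin J) × Fin (nvec j))
    (c := fun p => lam p.1) (H := fun p => hj p.1) (Z := fun p => Z p.1 p.2)
    (u := Real.log (1 / η)) (fun p => hlam_nonneg p.1) hL hMlam_nonneg hP_meas hP_nonneg
    hh_nonneg hh_meas (fun p => hj_pos p.1) (fun p => hj_meas p.1) hδ hδ_meas
    (fun p x y => (mul_le_mul_of_nonneg_left (hM p.1 x y) (hlam_nonneg p.1)).trans (hMlam p.1))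
    (fun p => hZ_meas p.1 p.2) (fun p => hlaw p.1 p.2) hind (fun p => hd2_int p.1)
  rw [show Real.exp (-Real.log (1 / η)) = η by
    rw [one_div, Real.log_inv, neg_neg, Real.exp_log hη]] at htail
  refine (ofReal_one_sub_le_prob_compl hη.le htail).trans (measure_mono fun ω hω => ?_)
  have hlam_sum' : ∑ j, (nvec j : ℝ) * lam j = 1 := by simpa only [mul_comm] using hlam_sum
  simp only [Set.mem_compl_iff, Set.mem_ofPred_eq, not_lt, Fintype.sum_sigma, Finset.sum_const,
    Finset.card_univ, Fintype.card_fin, nsmul_eq_mul, ← Finset.mul_sum, mul_assoc,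
    hlam_sum', one_mul] at hω ⊢
  linarith

/-- Generalization error bound for the λ-weighted IPS estimator (Theorem 1): with
probability at least `1 - η`,
`R(h) ≤ R̂_λ(h) + 2 L M_λ log(1/η) / 3 + L √(2 Σ_j n_j λ_j² d₂(h‖h_j; P) log(1/η))`,
where `M_λ ≥ λ_j M_j` for all `j`, `M_j` bounds `d_∞(h‖h_j)` (the sup of the ratio `h/h_j`),
and `d₂(h‖h_j; P) = ∫∫ h²/h_j · P`. -/
theorem lambda_weighted_generalization_bound {X Y Ω : Type*} [MeasurableSpace X]
    [MeasurableSpace Y] [MeasurableSpace Ω]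
    (μ : Measure X) (ν : Measure Y) [SigmaFinite μ] [SigmaFinite ν]
    (μΩ : Measure Ω) [IsProbabilityMeasure μΩ]
    (J : ℕ) (nvec : Fin J → ℕ)
    (lam : Fin J → ℝ) (hlam_nonneg : ∀ j, 0 ≤ lam j)
    (hlam_sum : ∑ j, lam j * (nvec j : ℝ) = 1)
    (Z : (j : Fin J) → Fin (nvec j) → Ω → X × Y)
    (Pd : X → ℝ) (h : X → Y → ℝ) (hj : Fin J → X → Y → ℝ) (δ : X × Y → ℝ)
    (L : ℝ) (M : Fin J → ℝ) (Mlam : ℝ) (η : ℝ) (hη : 0 < η)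
    (hP_nonneg : ∀ x, 0 ≤ Pd x) (hP_density : ∫ x, Pd x ∂μ = 1) (hP_meas : Measurable Pd)
    (hh_nonneg : ∀ x y, 0 ≤ h x y) (hh_density : ∀ x, ∫ y, h x y ∂ν = 1)
    (hh_meas : Measurable fun z : X × Y => h z.1 z.2)
    (hj_pos : ∀ j x y, 0 < hj j x y) (hj_density : ∀ j x, ∫ y, hj j x y ∂ν = 1)
    (hj_meas : ∀ j, Measurable fun z : X × Y => hj j z.1 z.2)
    (hδ : ∀ z, δ z ∈ Set.Icc (0 : ℝ) L) (hδ_meas : Measurable δ)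
    (hM : ∀ j x y, h x y / hj j x y ≤ M j)
    (hMlam : ∀ j, lam j * M j ≤ Mlam)
    (hZ_meas : ∀ j i, Measurable (Z j i))
    (hlaw : ∀ j i, Measure.map (Z j i) μΩ
      = (μ.prod ν).withDensity fun z => ENNReal.ofReal (hj j z.1 z.2 * Pd z.1))
    (hind : iIndepFun
      (fun p : (j : Fin J) × Fin (nvec j) => Z p.1 p.2) μΩ)
    (hd2_int : ∀ j, Integrable
      (fun z : X × Y => (h z.1 z.2) ^ 2 / hj j z.1 z.2 * Pd z.1) (μ.prod ν))
    (hR_int : Integrable (fun z : X × Y => δ z * h z.1 z.2 * Pd z.1) (μ.prod ν)) :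
    μΩ {ω | ∫ z : X × Y, δ z * h z.1 z.2 * Pd z.1 ∂(μ.prod ν)
        ≤ (∑ j, lam j *
            ∑ i, h (Z j i ω).1 (Z j i ω).2 / hj j (Z j i ω).1 (Z j i ω).2 * δ (Z j i ω))
          + 2 * L * Mlam * Real.log (1 / η) / 3
          + L * Real.sqrt (2 * (∑ j, (nvec j : ℝ) * (lam j) ^ 2 *
              ∫ z : X × Y, (h z.1 z.2) ^ 2 / hj j z.1 z.2 * Pd z.1 ∂(μ.prod ν))
              * Real.log (1 / η))}
      ≥ ENNReal.ofReal (1 - η) :=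
  lambda_weighted_generalization_bound_general μ ν μΩ J nvec lam hlam_nonneg hlam_sum Z Pd h hj δ L
    M Mlam η hη hP_nonneg hP_meas hh_nonneg hh_meas hj_pos hj_meas hδ hδ_meas hM hMlam hZ_meas hlaw
    hind hd2_int
end

section
/- Under the same multi-logger setting with δ ∈ [0, L] and d_∞(h||h_j) ≤ M_j, setting M_naive = max_j M_j, for any η > 0, with probability at least 1 − η: R(h) ≤ R̂_naive(h) + (2 L M_naive log(1/η))/(3n) + L √((2 Σ_{j=1}^J n_j d_2(h||h_j; P) log(1/η))/n^2). -/
/-!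
Each logged sample contributes the importance-weighted loss `h/h_j · δ`, which is nonnegative,
has mean `R(h)` under the logging distribution, and has second moment at most `L² d₂(h‖h_j; P)`.
For a nonnegative variable `exp (-s Y) ≤ 1 - s Y + s² Y² / 2`, so its lower tail is
sub-Gaussian with variance proxy `E[Y²]`; a Chernoff bound for the independent sum with the
optimal `s = t / V` gives `P(n R - Σ Y > t) ≤ exp (-t² / (2V))` with `V = L² Σ_j n_j d₂`, and
`t = √(2 V log(1/η))`, which is `n` times the square-root term, already makes this at most `η`;
the `M_naive` term is slack.
-/

open MeasureTheory ProbabilityTheory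

-- `(1 + u + u²/2)(1 - u + u²/2) = 1 + u⁴/4 ≥ 1` and `exp u ≥ 1 + u + u²/2`.
theorem Real.exp_neg_le_one_sub_add_sq_div_two {u : ℝ} (hu : 0 ≤ u) :
    Real.exp (-u) ≤ 1 - u + u ^ 2 / 2 := by
  have hexp := Real.quadratic_le_exp_of_nonneg hu
  have hq : 0 < 1 - u + u ^ 2 / 2 := by nlinarith [sq_nonneg (u - 1)]
  rw [Real.exp_neg, inv_le_iff_one_le_mul₀ (Real.exp_pos u)]
  nlinarith [mul_le_mul_of_nonneg_right hexp hq.le, pow_two_nonneg (u ^ 2)]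

theorem MeasureTheory.integral_eq_zero_of_integral_sq_eq_zero {Ω : Type*} [MeasurableSpace Ω]
    {μ : Measure Ω} {Y : Ω → ℝ} (hY : Integrable (fun ω => Y ω ^ 2) μ)
    (h : ∫ ω, Y ω ^ 2 ∂μ = 0) : ∫ ω, Y ω ∂μ = 0 := by
  have hsq : (fun ω => Y ω ^ 2) =ᵐ[μ] 0 :=
    (integral_eq_zero_iff_of_nonneg (fun ω => sq_nonneg (Y ω)) hY).mp h
  exact integral_eq_zero_of_ae (hsq.mono fun ω hω => pow_eq_zero_iff two_ne_zero |>.mp hω)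

namespace ProbabilityTheory

variable {Ω : Type*} [MeasurableSpace Ω] {μ : Measure Ω} [IsProbabilityMeasure μ]

theorem mgf_neg_le_exp_of_nonneg {Y : Ω → ℝ} (hY0 : 0 ≤ Y) (hY : MemLp Y 2 μ) {s : ℝ}
    (hs : 0 ≤ s) :
    mgf Y μ (-s) ≤ Real.exp (-(s * ∫ ω, Y ω ∂μ) + s ^ 2 * (∫ ω, Y ω ^ 2 ∂μ) / 2) := by
  have hlin : Integrable (fun ω => 1 - s * Y ω) μ :=
    (integrable_const 1).sub ((hY.integrable one_le_two).const_mul s)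
  have hsq : Integrable (fun ω => s ^ 2 / 2 * Y ω ^ 2) μ := hY.integrable_sq.const_mul _
  calc mgf Y μ (-s) ≤ ∫ ω, (1 - s * Y ω + s ^ 2 / 2 * Y ω ^ 2) ∂μ := by
        refine integral_mono_of_nonneg (.of_forall fun ω => (Real.exp_pos _).le)
          (hlin.add hsq) (.of_forall fun ω => ?_)
        have := Real.exp_neg_le_one_sub_add_sq_div_two (mul_nonneg hs (hY0 ω))
        simp only [neg_mul]
        linarith
    _ = 1 + (-(s * ∫ ω, Y ω ∂μ) + s ^ 2 * (∫ ω, Y ω ^ 2 ∂μ) / 2) := by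
        rw [integral_add hlin hsq,
          integral_sub (integrable_const 1) ((hY.integrable one_le_two).const_mul s),
          integral_const_mul, integral_const_mul, integral_const, probReal_univ, one_smul]
        ring
    _ ≤ _ := by
        linarith [Real.add_one_le_exp (-(s * ∫ ω, Y ω ∂μ) + s ^ 2 * (∫ ω, Y ω ^ 2 ∂μ) / 2)]

variable {ι : Type*} [Fintype ι] {Y : ι → Ω → ℝ}

theorem measureReal_le_sum_integral_sub_sum_le_exp (hind : iIndepFun Y μ)
    (hmeas : ∀ i, Measurable (Y i)) (hY0 : ∀ i, 0 ≤ Y i) (hY : ∀ i, MemLp (Y i) 2 μ)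
    {s : ℝ} (hs : 0 ≤ s) (t : ℝ) :
    μ.real {ω | t ≤ ∑ i, ∫ x, Y i x ∂μ - ∑ i, Y i ω}
      ≤ Real.exp (-(s * t) + s ^ 2 * (∑ i, ∫ x, Y i x ^ 2 ∂μ) / 2) := by
  have hsum : ∀ ω, (∑ i, Y i) ω = ∑ i, Y i ω := fun ω => Finset.sum_apply ω _ _
  have hevent : {ω | t ≤ ∑ i, ∫ x, Y i x ∂μ - ∑ i, Y i ω}
      = {ω | t - ∑ i, ∫ x, Y i x ∂μ ≤ (-∑ i, Y i) ω} := by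
    ext ω
    simp only [Set.mem_ofPred_eq, Pi.neg_apply, hsum]
    constructor <;> intro h <;> linarith
  have hchernoff := measure_ge_le_exp_mul_mgf (X := -∑ i, Y i) (μ := μ)
    (t - ∑ i, ∫ x, Y i x ∂μ) hs
    (integrable_exp_mul_of_le s 0 hs (by fun_prop)
      (.of_forall fun ω => by simpa [hsum] using Finset.sum_nonneg fun i _ => hY0 i ω))
  have hmgf : mgf (-∑ i, Y i) μ s
      ≤ Real.exp (∑ i, (-(s * ∫ x, Y i x ∂μ) + s ^ 2 * (∫ x, Y i x ^ 2 ∂μ) / 2)) := by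
    rw [mgf_neg, hind.mgf_sum hmeas, Real.exp_sum]
    exact Finset.prod_le_prod (fun i _ => mgf_nonneg)
      fun i _ => mgf_neg_le_exp_of_nonneg (hY0 i) (hY i) hs
  rw [hevent]
  refine hchernoff.trans ((mul_le_mul_of_nonneg_left hmgf (Real.exp_pos _).le).trans_eq ?_)
  rw [← Real.exp_add, Finset.sum_add_distrib, Finset.sum_neg_distrib, ← Finset.mul_sum,
    ← Finset.sum_div, ← Finset.mul_sum]
  ring_nf

theorem measureReal_lt_sum_integral_sub_sum_le_exp_neg (hind : iIndepFun Y μ)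
    (hmeas : ∀ i, Measurable (Y i)) (hY0 : ∀ i, 0 ≤ Y i) (hY : ∀ i, MemLp (Y i) 2 μ)
    {V g t : ℝ} (hV : ∑ i, ∫ x, Y i x ^ 2 ∂μ ≤ V) (ht : √(2 * V * g) ≤ t) :
    μ.real {ω | t < ∑ i, ∫ x, Y i x ∂μ - ∑ i, Y i ω} ≤ Real.exp (-g) := by
  obtain ⟨ht0, htV⟩ := Real.sqrt_le_iff.mp ht
  have hsq_nonneg : ∀ i, 0 ≤ ∫ x, Y i x ^ 2 ∂μ := fun i => integral_nonneg fun x => sq_nonneg _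
  rcases le_or_gt V 0 with hV0 | hV0
  · have hmean : ∀ i, ∫ x, Y i x ∂μ = 0 := fun i =>
      integral_eq_zero_of_integral_sq_eq_zero (hY i).integrable_sq <|
        (Finset.sum_eq_zero_iff_of_nonneg fun i _ => hsq_nonneg i).mp
          (le_antisymm (hV.trans hV0) (Finset.sum_nonneg fun i _ => hsq_nonneg i)) i
          (Finset.mem_univ i)
    have hempty : {ω | t < ∑ i, ∫ x, Y i x ∂μ - ∑ i, Y i ω} = ∅ := by
      refine Set.eq_empty_of_forall_notMem fun ω hω => ?_
      simp only [Set.mem_ofPred_eq, hmean, Finset.sum_const_zero, zero_sub] at hω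
      linarith [Finset.sum_nonneg fun i (_ : i ∈ Finset.univ) => hY0 i ω]
    rw [hempty, measureReal_empty]
    exact (Real.exp_pos _).le
  · calc μ.real {ω | t < ∑ i, ∫ x, Y i x ∂μ - ∑ i, Y i ω}
        ≤ μ.real {ω | t ≤ ∑ i, ∫ x, Y i x ∂μ - ∑ i, Y i ω} :=
          measureReal_mono fun ω (hω : t < _) => hω.le
      _ ≤ Real.exp (-(t / V * t) + (t / V) ^ 2 * (∑ i, ∫ x, Y i x ^ 2 ∂μ) / 2) :=
          measureReal_le_sum_integral_sub_sum_le_exp hind hmeas hY0 hY (by positivity) t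
      _ ≤ Real.exp (-g) := by
          rw [Real.exp_le_exp]
          have hS : (t / V) ^ 2 * (∑ i, ∫ x, Y i x ^ 2 ∂μ) / 2 ≤ (t / V) ^ 2 * V / 2 := by
            gcongr
          have hg : g ≤ t ^ 2 / (2 * V) := by rw [le_div_iff₀ (by positivity)]; linarith
          have hopt : -(t / V * t) + (t / V) ^ 2 * V / 2 = -(t ^ 2 / (2 * V)) := by
            field_simp; ring
          linarith

theorem ofReal_one_sub_exp_neg_le_measure_sum_integral_sub_sum_le (hind : iIndepFun Y μ)
    (hmeas : ∀ i, Measurable (Y i)) (hY0 : ∀ i, 0 ≤ Y i) (hY : ∀ i, MemLp (Y i) 2 μ)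
    {V g t : ℝ} (hV : ∑ i, ∫ x, Y i x ^ 2 ∂μ ≤ V) (ht : √(2 * V * g) ≤ t) :
    ENNReal.ofReal (1 - Real.exp (-g)) ≤ μ {ω | ∑ i, ∫ x, Y i x ∂μ - ∑ i, Y i ω ≤ t} := by
  have hbad := measureReal_lt_sum_integral_sub_sum_le_exp_neg hind hmeas hY0 hY hV ht
  have hmeas_bad : MeasurableSet {ω | t < ∑ i, ∫ x, Y i x ∂μ - ∑ i, Y i ω} :=
    measurableSet_lt measurable_const (measurable_const.sub (by fun_prop))
  have hcompl : {ω | ∑ i, ∫ x, Y i x ∂μ - ∑ i, Y i ω ≤ t}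
      = {ω | t < ∑ i, ∫ x, Y i x ∂μ - ∑ i, Y i ω}ᶜ := by
    ext ω; simp
  rw [hcompl, prob_compl_eq_one_sub hmeas_bad, ENNReal.ofReal_sub _ (Real.exp_pos _).le,
    ENNReal.ofReal_one]
  gcongr
  rwa [← ofReal_measureReal, ENNReal.ofReal_le_ofReal_iff (Real.exp_pos _).le]

end ProbabilityTheory

section ImportanceWeighting

variable {Ω E : Type*} [MeasurableSpace Ω] [MeasurableSpace E] {μΩ : Measure Ω}
  {ρ : Measure E} {Z : Ω → E}

theorem integral_comp_eq_integral_mul_of_map_eq_withDensity (hZ : Measurable Z)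
    {f : E → ℝ} (hf : Measurable f) (hf0 : ∀ z, 0 ≤ f z)
    (hlaw : μΩ.map Z = ρ.withDensity fun z => ENNReal.ofReal (f z))
    {F : E → ℝ} (hF : Measurable F) :
    ∫ ω, F (Z ω) ∂μΩ = ∫ z, F z * f z ∂ρ := by
  rw [← integral_map hZ.aemeasurable hF.aestronglyMeasurable, hlaw,
    integral_withDensity_eq_integral_toReal_smul (by fun_prop)
      (.of_forall fun _ => ENNReal.ofReal_lt_top)]
  simp only [ENNReal.toReal_ofReal (hf0 _), smul_eq_mul, mul_comm]

section SingleSample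

variable {w q p δ : E → ℝ} (hZ : Measurable Z) (hw : Measurable w) (hq : Measurable q)
  (hp : Measurable p) (hδ : Measurable δ) (hq0 : ∀ z, 0 < q z) (hp0 : ∀ z, 0 ≤ p z)
  (hlaw : μΩ.map Z = ρ.withDensity fun z => ENNReal.ofReal (q z * p z))
include hZ hw hq hp hδ hq0 hp0 hlaw

theorem integral_importance_weighted_eq :
    ∫ ω, w (Z ω) / q (Z ω) * δ (Z ω) ∂μΩ = ∫ z, δ z * w z * p z ∂ρ := by
  rw [integral_comp_eq_integral_mul_of_map_eq_withDensity hZ (f := fun z => q z * p z)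
    (by fun_prop) (fun z => mul_nonneg (hq0 z).le (hp0 z)) hlaw
    (F := fun z => w z / q z * δ z) (by fun_prop)]
  congr 1 with z
  field_simp [(hq0 z).ne']

theorem integral_importance_weighted_sq_le {L : ℝ} (hδL : ∀ z, |δ z| ≤ L)
    (hint : Integrable (fun z => w z ^ 2 / q z * p z) ρ) :
    ∫ ω, (w (Z ω) / q (Z ω) * δ (Z ω)) ^ 2 ∂μΩ ≤ L ^ 2 * ∫ z, w z ^ 2 / q z * p z ∂ρ := by
  rw [integral_comp_eq_integral_mul_of_map_eq_withDensity hZ (f := fun z => q z * p z)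
    (by fun_prop) (fun z => mul_nonneg (hq0 z).le (hp0 z)) hlaw
    (F := fun z => (w z / q z * δ z) ^ 2) (by fun_prop), ← integral_const_mul]
  refine integral_mono_of_nonneg (.of_forall fun z => ?_) (hint.const_mul _)
    (.of_forall fun z => ?_)
  · exact mul_nonneg (sq_nonneg _) (mul_nonneg (hq0 z).le (hp0 z))
  · have hδ2 : δ z ^ 2 ≤ L ^ 2 := sq_le_sq' (abs_le.mp (hδL z)).1 (abs_le.mp (hδL z)).2
    have := (hq0 z).le
    have := hp0 z
    calc (w z / q z * δ z) ^ 2 * (q z * p z) = δ z ^ 2 * (w z ^ 2 / q z * p z) := by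
          field_simp [(hq0 z).ne']
      _ ≤ L ^ 2 * (w z ^ 2 / q z * p z) := by gcongr

end SingleSample

theorem ofReal_one_sub_exp_neg_le_measure_card_mul_integral_sub_sum_importance_weighted_le
    {ι : Type*} [Fintype ι] [IsProbabilityMeasure μΩ] {Z : ι → Ω → E} {w p δ : E → ℝ}
    {q : ι → E → ℝ} {L B g t : ℝ} (hZ : ∀ i, Measurable (Z i)) (hind : iIndepFun Z μΩ)
    (hw : Measurable w) (hq : ∀ i, Measurable (q i)) (hp : Measurable p) (hδ : Measurable δ)
    (hw0 : ∀ z, 0 ≤ w z) (hq0 : ∀ i z, 0 < q i z) (hp0 : ∀ z, 0 ≤ p z)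
    (hδL : ∀ z, δ z ∈ Set.Icc 0 L) (hB : ∀ i z, w z / q i z ≤ B)
    (hlaw : ∀ i, μΩ.map (Z i) = ρ.withDensity fun z => ENNReal.ofReal (q i z * p z))
    (hint : ∀ i, Integrable (fun z => w z ^ 2 / q i z * p z) ρ)
    (ht : √(2 * (L ^ 2 * ∑ i, ∫ z, w z ^ 2 / q i z * p z ∂ρ) * g) ≤ t) :
    ENNReal.ofReal (1 - Real.exp (-g)) ≤ μΩ {ω | Fintype.card ι * ∫ z, δ z * w z * p z ∂ρ
      - ∑ i, w (Z i ω) / q i (Z i ω) * δ (Z i ω) ≤ t} := by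
  have hweight_nonneg : ∀ i z, 0 ≤ w z / q i z * δ z := fun i z =>
    mul_nonneg (div_nonneg (hw0 z) (hq0 i z).le) (hδL z).1
  have hweight_le : ∀ i z, w z / q i z * δ z ≤ B * L := fun i z =>
    mul_le_mul (hB i z) (hδL z).2 (hδL z).1 ((div_nonneg (hw0 z) (hq0 i z).le).trans (hB i z))
  have hweight_meas : ∀ i, Measurable fun z => w z / q i z * δ z := fun i => by fun_prop
  have hmeas : ∀ i, Measurable fun ω => w (Z i ω) / q i (Z i ω) * δ (Z i ω) := fun i =>
    (hweight_meas i).comp (hZ i)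
  have hsq : ∑ i, ∫ ω, (w (Z i ω) / q i (Z i ω) * δ (Z i ω)) ^ 2 ∂μΩ
      ≤ L ^ 2 * ∑ i, ∫ z, w z ^ 2 / q i z * p z ∂ρ := by
    rw [Finset.mul_sum]
    exact Finset.sum_le_sum fun i _ =>
      integral_importance_weighted_sq_le (hZ i) hw (hq i) hp hδ (hq0 i) hp0 (hlaw i)
        (fun z => abs_le.mpr ⟨by linarith [(hδL z).1, (hδL z).2], (hδL z).2⟩) (hint i)
  have htail := ofReal_one_sub_exp_neg_le_measure_sum_integral_sub_sum_le
    (Y := fun i ω => w (Z i ω) / q i (Z i ω) * δ (Z i ω)) (hind.comp _ hweight_meas) hmeas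
    (fun i ω => hweight_nonneg i _)
    (fun i => memLp_of_bounded (.of_forall fun ω => ⟨hweight_nonneg i _, hweight_le i _⟩)
      (hmeas i).aestronglyMeasurable 2) hsq ht
  simpa only [integral_importance_weighted_eq (hZ _) hw (hq _) hp hδ (hq0 _) hp0 (hlaw _),
    Finset.sum_const, Finset.card_univ, nsmul_eq_mul] using htail

end ImportanceWeighting

theorem naive_generalization_bound_general {X Y Ω : Type*} [MeasurableSpace X]
    [MeasurableSpace Y] [MeasurableSpace Ω]
    (μ : Measure X) (ν : Measure Y)
    (μΩ : Measure Ω) [IsProbabilityMeasure μΩ]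
    (J : ℕ) (nvec : Fin J → ℕ) (hn : 0 < ∑ j, nvec j)
    (Z : (j : Fin J) → Fin (nvec j) → Ω → X × Y)
    (Pd : X → ℝ) (h : X → Y → ℝ) (hj : Fin J → X → Y → ℝ) (δ : X × Y → ℝ)
    (L : ℝ) (M : Fin J → ℝ) (Mnaive : ℝ) (η : ℝ) (hη : 0 < η)
    (hP_nonneg : ∀ x, 0 ≤ Pd x) (hP_meas : Measurable Pd)
    (hh_nonneg : ∀ x y, 0 ≤ h x y) (hh_meas : Measurable fun z : X × Y => h z.1 z.2)
    (hj_pos : ∀ j x y, 0 < hj j x y) (hj_meas : ∀ j, Measurable fun z : X × Y => hj j z.1 z.2)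
    (hδ : ∀ z, δ z ∈ Set.Icc (0 : ℝ) L) (hδ_meas : Measurable δ)
    (hM : ∀ j x y, h x y / hj j x y ≤ M j)
    (hMnaive : ∀ j, M j ≤ Mnaive)
    (hZ_meas : ∀ j i, Measurable (Z j i))
    (hlaw : ∀ j i, Measure.map (Z j i) μΩ
      = (μ.prod ν).withDensity fun z => ENNReal.ofReal (hj j z.1 z.2 * Pd z.1))
    (hind : iIndepFun
      (fun p : (j : Fin J) × Fin (nvec j) => Z p.1 p.2) μΩ)
    (hd2_int : ∀ j, Integrable
      (fun z : X × Y => (h z.1 z.2) ^ 2 / hj j z.1 z.2 * Pd z.1) (μ.prod ν)) :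
    μΩ {ω | ∫ z : X × Y, δ z * h z.1 z.2 * Pd z.1 ∂(μ.prod ν)
        ≤ (1 / (∑ j, (nvec j : ℝ))) * (∑ j,
            ∑ i, h (Z j i ω).1 (Z j i ω).2 / hj j (Z j i ω).1 (Z j i ω).2 * δ (Z j i ω))
          + 2 * L * Mnaive * Real.log (1 / η) / (3 * ∑ j, (nvec j : ℝ))
          + L * Real.sqrt (2 * (∑ j, (nvec j : ℝ) *
              ∫ z : X × Y, (h z.1 z.2) ^ 2 / hj j z.1 z.2 * Pd z.1 ∂(μ.prod ν))
              * Real.log (1 / η) / (∑ j, (nvec j : ℝ)) ^ 2)}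
      ≥ ENNReal.ofReal (1 - η) := by
  rcases le_or_gt 1 η with hη1 | hη1
  · simp [ENNReal.ofReal_eq_zero.mpr (sub_nonpos.mpr hη1)]
  have hexp : Real.exp (-Real.log (1 / η)) = η := by
    rw [one_div, Real.log_inv, neg_neg, Real.exp_log hη]
  set n : ℝ := ∑ j, (nvec j : ℝ) with hn_def
  set g := Real.log (1 / η)
  set W := ∑ j, (nvec j : ℝ) *
    ∫ z : X × Y, (h z.1 z.2) ^ 2 / hj j z.1 z.2 * Pd z.1 ∂(μ.prod ν)
  set T := 2 * L * Mnaive * g / 3 + L * √(2 * W * g)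
  have hn' : 0 < n := by rw [hn_def, ← Nat.cast_sum]; exact_mod_cast hn
  obtain ⟨⟨j0, i0⟩⟩ : Nonempty ((j : Fin J) × Fin (nvec j)) :=
    Fintype.card_pos_iff.mp (by simpa [Fintype.card_sigma] using hn)
  obtain ⟨ω0⟩ := nonempty_of_isProbabilityMeasure μΩ
  have hL : 0 ≤ L := (hδ (Z j0 i0 ω0)).1.trans (hδ _).2
  have hMn : 0 ≤ Mnaive := (div_nonneg (hh_nonneg _ _) (hj_pos _ _ _).le).trans
    ((hM j0 (Z j0 i0 ω0).1 (Z j0 i0 ω0).2).trans (hMnaive j0))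
  have hg : 0 ≤ g := Real.log_nonneg (by rw [one_le_div hη]; exact hη1.le)
  have hW : ∑ p : (j : Fin J) × Fin (nvec j),
      ∫ z : X × Y, (h z.1 z.2) ^ 2 / hj p.1 z.1 z.2 * Pd z.1 ∂(μ.prod ν) = W := by
    simp [Fintype.sum_sigma, W]
  have hT : √(2 * (L ^ 2 * W) * g) ≤ T := by
    rw [show 2 * (L ^ 2 * W) * g = L ^ 2 * (2 * W * g) by ring, Real.sqrt_mul (sq_nonneg L),
      Real.sqrt_sq hL]
    exact le_add_of_nonneg_left (by positivity)
  have htail := ofReal_one_sub_exp_neg_le_measure_card_mul_integral_sub_sum_importance_weighted_le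
    (ι := (j : Fin J) × Fin (nvec j)) (Z := fun p ω => Z p.1 p.2 ω) (w := fun z => h z.1 z.2)
    (p := fun z => Pd z.1) (q := fun p z => hj p.1 z.1 z.2) (fun p => hZ_meas p.1 p.2) hind
    hh_meas (fun p => hj_meas p.1) (hP_meas.comp measurable_fst) hδ_meas
    (fun z => hh_nonneg z.1 z.2) (fun p z => hj_pos p.1 z.1 z.2) (fun z => hP_nonneg z.1)
    hδ (fun p z => (hM p.1 z.1 z.2).trans (hMnaive p.1)) (fun p => hlaw p.1 p.2)
    (fun p => hd2_int p.1) (hW ▸ hT)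
  rw [hexp] at htail
  refine htail.trans (measure_mono fun ω hω => ?_)
  simp only [Set.mem_ofPred_eq, Fintype.card_sigma, Fintype.card_fin, Nat.cast_sum,
    Fintype.sum_sigma] at hω ⊢
  have hrhs : ∀ Q, 1 / n * Q + 2 * L * Mnaive * g / (3 * n) + L * (√(2 * W * g) / n)
      = (Q + T) / n := fun Q => by simp only [T]; ring
  rw [Real.sqrt_div' _ (sq_nonneg n), Real.sqrt_sq hn'.le, hrhs, le_div_iff₀ hn']
  linarith

/-- Generalization error bound for the naive IPS estimator (Corollary 1): with probability
at least `1 - η`,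
`R(h) ≤ R̂_naive(h) + 2 L M_naive log(1/η) / (3n) + L √(2 Σ_j n_j d₂(h‖h_j; P) log(1/η) / n²)`,
where `M_naive ≥ M_j` for all `j` and `M_j` bounds `d_∞(h‖h_j)`. -/
theorem naive_generalization_bound {X Y Ω : Type*} [MeasurableSpace X]
    [MeasurableSpace Y] [MeasurableSpace Ω]
    (μ : Measure X) (ν : Measure Y) [SigmaFinite μ] [SigmaFinite ν]
    (μΩ : Measure Ω) [IsProbabilityMeasure μΩ]
    (J : ℕ) (nvec : Fin J → ℕ) (hn : 0 < ∑ j, nvec j)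
    (Z : (j : Fin J) → Fin (nvec j) → Ω → X × Y)
    (Pd : X → ℝ) (h : X → Y → ℝ) (hj : Fin J → X → Y → ℝ) (δ : X × Y → ℝ)
    (L : ℝ) (M : Fin J → ℝ) (Mnaive : ℝ) (η : ℝ) (hη : 0 < η)
    (hP_nonneg : ∀ x, 0 ≤ Pd x) (hP_density : ∫ x, Pd x ∂μ = 1) (hP_meas : Measurable Pd)
    (hh_nonneg : ∀ x y, 0 ≤ h x y) (hh_density : ∀ x, ∫ y, h x y ∂ν = 1)
    (hh_meas : Measurable fun z : X × Y => h z.1 z.2)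
    (hj_pos : ∀ j x y, 0 < hj j x y) (hj_density : ∀ j x, ∫ y, hj j x y ∂ν = 1)
    (hj_meas : ∀ j, Measurable fun z : X × Y => hj j z.1 z.2)
    (hδ : ∀ z, δ z ∈ Set.Icc (0 : ℝ) L) (hδ_meas : Measurable δ)
    (hM : ∀ j x y, h x y / hj j x y ≤ M j)
    (hMnaive : ∀ j, M j ≤ Mnaive)
    (hZ_meas : ∀ j i, Measurable (Z j i))
    (hlaw : ∀ j i, Measure.map (Z j i) μΩ
      = (μ.prod ν).withDensity fun z => ENNReal.ofReal (hj j z.1 z.2 * Pd z.1))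
    (hind : iIndepFun
      (fun p : (j : Fin J) × Fin (nvec j) => Z p.1 p.2) μΩ)
    (hd2_int : ∀ j, Integrable
      (fun z : X × Y => (h z.1 z.2) ^ 2 / hj j z.1 z.2 * Pd z.1) (μ.prod ν))
    (hR_int : Integrable (fun z : X × Y => δ z * h z.1 z.2 * Pd z.1) (μ.prod ν)) :
    μΩ {ω | ∫ z : X × Y, δ z * h z.1 z.2 * Pd z.1 ∂(μ.prod ν)
        ≤ (1 / (∑ j, (nvec j : ℝ))) * (∑ j,
            ∑ i, h (Z j i ω).1 (Z j i ω).2 / hj j (Z j i ω).1 (Z j i ω).2 * δ (Z j i ω))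
          + 2 * L * Mnaive * Real.log (1 / η) / (3 * ∑ j, (nvec j : ℝ))
          + L * Real.sqrt (2 * (∑ j, (nvec j : ℝ) *
              ∫ z : X × Y, (h z.1 z.2) ^ 2 / hj j z.1 z.2 * Pd z.1 ∂(μ.prod ν))
              * Real.log (1 / η) / (∑ j, (nvec j : ℝ)) ^ 2)}
      ≥ ENNReal.ofReal (1 - η) :=
  naive_generalization_bound_general μ ν μΩ J nvec hn Z Pd h hj δ L M Mnaive η hη hP_nonneg hP_meas
    hh_nonneg hh_meas hj_pos hj_meas hδ hδ_meas hM hMnaive hZ_meas hlaw hind hd2_int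
end

section
/- The variance of the balanced IPS estimator is no larger than that of the naive IPS estimator: Var(R̂_bal(h)) ≤ Var(R̂_naive(h)), where both are computed over the multi-logger sampling distribution x_i^j ~ P, y_i^j ~ h_j(·|x_i^j), assuming the ratio h/h_j is well-defined for all j. -/
/-!
Index the samples by `p = (j, i)` and write `q_p = h_j` for the logging density of sample `p`,
so that `h_avg` is the plain average `q̄` of the `q_p`; put `g = h δ`. By independence, each variance
is the sum of the per-sample variances under the laws `q_p · P`. For the second moments, pointwise
`∑_p q_p (g / q̄)² ≤ ∑_p q_p (g / q_p)²` is the harmonic–arithmetic mean inequality (Sedrakyan's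
lemma). For the first moments, every naive term has the same mean `m = ∫ P g`, while the `N`
balanced means average to `m`, so by Cauchy–Schwarz their squares sum to at least `N m²`.
-/

open MeasureTheory ProbabilityTheory Finset

section WithDensityOfReal

variable {E : Type*} [MeasurableSpace E] {κ : Measure E} {ρ : E → ℝ}

theorem integral_withDensity_ofReal (hρ : Measurable ρ) (hρ0 : ∀ z, 0 ≤ ρ z) (g : E → ℝ) :
    ∫ z, g z ∂κ.withDensity (fun z => ENNReal.ofReal (ρ z)) = ∫ z, ρ z * g z ∂κ := by
  rw [integral_withDensity_eq_integral_toReal_smul hρ.ennreal_ofReal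
    (ae_of_all _ fun _ => ENNReal.ofReal_lt_top)]
  simp only [ENNReal.toReal_ofReal (hρ0 _), smul_eq_mul]

theorem integrable_withDensity_ofReal_iff (hρ : Measurable ρ) (hρ0 : ∀ z, 0 ≤ ρ z)
    {g : E → ℝ} : Integrable g (κ.withDensity fun z => ENNReal.ofReal (ρ z)) ↔
      Integrable (fun z => ρ z * g z) κ := by
  rw [integrable_withDensity_iff_integrable_smul' hρ.ennreal_ofReal
    (ae_of_all _ fun _ => ENNReal.ofReal_lt_top)]
  simp only [ENNReal.toReal_ofReal (hρ0 _), smul_eq_mul]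

theorem variance_eq_of_eq_withDensity_ofReal {P : Measure E} [IsProbabilityMeasure P]
    (hP : P = κ.withDensity fun z => ENNReal.ofReal (ρ z)) (hρ : Measurable ρ)
    (hρ0 : ∀ z, 0 ≤ ρ z) {f : E → ℝ} (hf : MemLp f 2 P) :
    Var[f; P] = ∫ z, ρ z * f z ^ 2 ∂κ - (∫ z, ρ z * f z ∂κ) ^ 2 := by
  subst hP
  rw [variance_eq_sub hf, integral_withDensity_ofReal hρ hρ0, integral_withDensity_ofReal hρ hρ0]
  rfl

end WithDensityOfReal

section IndependentSums

variable {Ω E ι : Type*} [MeasurableSpace Ω] [MeasurableSpace E] [Fintype ι] {μ : Measure Ω}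

theorem MeasureTheory.MemLp.of_sum_of_nonneg {r : ENNReal} {T : ι → Ω → ℝ}
    (hS : MemLp (fun ω => ∑ p, T p ω) r μ) (hT : ∀ p, AEStronglyMeasurable (T p) μ)
    (hT0 : ∀ p ω, 0 ≤ T p ω) (p : ι) : MemLp (T p) r μ := by
  refine hS.of_le (hT p) (ae_of_all _ fun ω => ?_)
  rw [Real.norm_of_nonneg (hT0 p ω), Real.norm_of_nonneg (sum_nonneg fun q _ => hT0 q ω)]
  exact single_le_sum (fun q _ => hT0 q ω) (mem_univ p)

theorem ProbabilityTheory.iIndepFun.variance_sum_comp {Z : ι → Ω → E} {f : ι → E → ℝ}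
    (hind : iIndepFun Z μ) (hZ : ∀ p, Measurable (Z p)) (hf : ∀ p, Measurable (f p))
    (hL2 : ∀ p, MemLp (fun ω => f p (Z p ω)) 2 μ) :
    Var[fun ω => ∑ p, f p (Z p ω); μ] = ∑ p, Var[f p; μ.map (Z p)] := by
  have hsum := IndepFun.variance_sum (s := univ) (fun p _ => hL2 p)
    (fun p _ q _ hpq => (hind.indepFun hpq).comp (hf p) (hf q))
  rw [← sum_fn, hsum]
  exact sum_congr rfl fun p _ => (variance_map (hf p).aemeasurable (hZ p).aemeasurable).symm

end IndependentSums

section AverageDensity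

variable {ι : Type*} [Fintype ι]

theorem sum_mul_div_avg {t : ι → ℝ} (ht : ∀ p, 0 < t p) (c : ℝ) :
    ∑ p, t p * (c / ((∑ p', t p') / Fintype.card ι)) = Fintype.card ι * c := by
  rcases isEmpty_or_nonempty ι with hι | hι
  · simp
  have hpos : 0 < ∑ p, t p := sum_pos (fun p _ => ht p) univ_nonempty
  rw [← sum_mul]
  field_simp

theorem sum_mul_div_avg_sq_le {t : ι → ℝ} (ht : ∀ p, 0 < t p) (c : ℝ) :
    ∑ p, t p * (c / ((∑ p', t p') / Fintype.card ι)) ^ 2 ≤ ∑ p, t p * (c / t p) ^ 2 := by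
  rcases isEmpty_or_nonempty ι with hι | hι
  · simp
  have hpos : 0 < ∑ p, t p := sum_pos (fun p _ => ht p) univ_nonempty
  have hsed := sq_sum_div_le_sum_sq_div univ (fun _ => c) fun p _ => ht p
  calc ∑ p, t p * (c / ((∑ p', t p') / Fintype.card ι)) ^ 2
      = (∑ _p : ι, c) ^ 2 / ∑ p, t p := by
        rw [← sum_mul, sum_const, card_univ, nsmul_eq_mul]
        field_simp
    _ ≤ ∑ p, c ^ 2 / t p := hsed
    _ = ∑ p, t p * (c / t p) ^ 2 := sum_congr rfl fun p _ => by field_simp [(ht p).ne']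

variable {E : Type*}

/-- Indexing by samples rather than by loggers, the paper's `h_avg = (∑_j n_j h_j) / n` becomes this
plain average. -/
noncomputable def avgDensity (q : ι → E → ℝ) (z : E) : ℝ := (∑ p, q p z) / Fintype.card ι

theorem avgDensity_nonneg {q : ι → E → ℝ} (hq0 : ∀ p z, 0 ≤ q p z) (z : E) :
    0 ≤ avgDensity q z :=
  div_nonneg (sum_nonneg fun p _ => hq0 p z) (Nat.cast_nonneg _)

theorem avgDensity_sigma_fst {J : Type*} [Fintype J] {α : J → Type*} [∀ i, Fintype (α i)]
    (F : J → E → ℝ) (z : E) : avgDensity (fun p : Sigma α => F p.1) z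
      = (∑ i, (Fintype.card (α i) : ℝ) * F i z) / ∑ i, (Fintype.card (α i) : ℝ) := by
  simp [avgDensity, Fintype.sum_sigma]

variable [MeasurableSpace E] {κ : Measure E} {q : ι → E → ℝ} {w g : E → ℝ}

theorem sum_integral_mul_div_avgDensity_sq_le (hq0 : ∀ p z, 0 < q p z) (hw0 : ∀ z, 0 ≤ w z)
    (hbal : ∀ p, Integrable (fun z => q p z * w z * (g z / avgDensity q z) ^ 2) κ)
    (hnai : ∀ p, Integrable (fun z => q p z * w z * (g z / q p z) ^ 2) κ) :
    ∑ p, ∫ z, q p z * w z * (g z / avgDensity q z) ^ 2 ∂κ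
      ≤ ∑ p, ∫ z, q p z * w z * (g z / q p z) ^ 2 ∂κ := by
  rw [← integral_finsetSum _ fun p _ => hbal p, ← integral_finsetSum _ fun p _ => hnai p]
  refine integral_mono (integrable_finsetSum _ fun p _ => hbal p)
    (integrable_finsetSum _ fun p _ => hnai p) fun z => ?_
  simp only [mul_assoc, mul_left_comm _ (w z), ← mul_sum]
  exact mul_le_mul_of_nonneg_left (sum_mul_div_avg_sq_le (fun p => hq0 p z) (g z)) (hw0 z)

theorem card_mul_sq_integral_le_sum_sq_integral_div_avgDensity (hq0 : ∀ p z, 0 < q p z)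
    (hbal : ∀ p, Integrable (fun z => q p z * w z * (g z / avgDensity q z)) κ) :
    Fintype.card ι * (∫ z, w z * g z ∂κ) ^ 2
      ≤ ∑ p, (∫ z, q p z * w z * (g z / avgDensity q z) ∂κ) ^ 2 := by
  have hmean : ∑ p, ∫ z, q p z * w z * (g z / avgDensity q z) ∂κ
      = Fintype.card ι * ∫ z, w z * g z ∂κ := by
    rw [← integral_finsetSum _ fun p _ => hbal p, ← integral_const_mul]
    refine integral_congr_ae (ae_of_all _ fun z => ?_)
    simp only [mul_assoc, mul_left_comm _ (w z), ← mul_sum]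
    exact congrArg (w z * ·) (sum_mul_div_avg (fun p => hq0 p z) (g z))
  have hcs := sq_sum_le_card_mul_sum_sq (s := univ)
    (f := fun p => ∫ z, q p z * w z * (g z / avgDensity q z) ∂κ)
  rw [hmean, card_univ] at hcs
  rcases (Nat.cast_nonneg (α := ℝ) (Fintype.card ι)).eq_or_lt with hN | hN
  · rw [← hN, zero_mul]
    exact sum_nonneg fun p _ => sq_nonneg _
  · exact le_of_mul_le_mul_left (by linarith) hN

theorem sum_variance_div_avgDensity_le {P : ι → Measure E} [∀ p, IsProbabilityMeasure (P p)]
    (hP : ∀ p, P p = κ.withDensity fun z => ENNReal.ofReal (q p z * w z))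
    (hq : ∀ p, Measurable (q p)) (hq0 : ∀ p z, 0 < q p z) (hw : Measurable w)
    (hw0 : ∀ z, 0 ≤ w z) (hbal : ∀ p, MemLp (fun z => g z / avgDensity q z) 2 (P p))
    (hnai : ∀ p, MemLp (fun z => g z / q p z) 2 (P p)) :
    ∑ p, Var[fun z => g z / avgDensity q z; P p] ≤ ∑ p, Var[fun z => g z / q p z; P p] := by
  have hρ : ∀ p, Measurable fun z => q p z * w z := fun p => (hq p).mul hw
  have hρ0 : ∀ p z, 0 ≤ q p z * w z := fun p z => mul_nonneg (hq0 p z).le (hw0 z)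
  have hint : ∀ p {f : E → ℝ}, Integrable f (P p) → Integrable (fun z => q p z * w z * f z) κ :=
    fun p _ hf => (integrable_withDensity_ofReal_iff (hρ p) (hρ0 p)).1 (hP p ▸ hf)
  have hmean : ∀ p, ∫ z, q p z * w z * (g z / q p z) ∂κ = ∫ z, w z * g z ∂κ := fun p =>
    integral_congr_ae (ae_of_all _ fun z => by field_simp [(hq0 p z).ne'])
  have hsecond := sum_integral_mul_div_avgDensity_sq_le hq0 hw0
    (fun p => hint p (hbal p).integrable_sq) (fun p => hint p (hnai p).integrable_sq)
  have hfirst := card_mul_sq_integral_le_sum_sq_integral_div_avgDensity hq0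
    (fun p => hint p ((hbal p).integrable one_le_two))
  rw [sum_congr rfl fun p _ => variance_eq_of_eq_withDensity_ofReal (hP p) (hρ p) (hρ0 p) (hbal p),
    sum_congr rfl fun p _ => variance_eq_of_eq_withDensity_ofReal (hP p) (hρ p) (hρ0 p) (hnai p)]
  simp only [hmean, sum_sub_distrib, sum_const, card_univ, nsmul_eq_mul]
  linarith

end AverageDensity

theorem variance_sum_div_avgDensity_le {Ω E ι : Type*} [MeasurableSpace Ω] [MeasurableSpace E]
    [Fintype ι] {μ : Measure Ω} [IsProbabilityMeasure μ] {κ : Measure E} {Z : ι → Ω → E}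
    {q : ι → E → ℝ} {w g : E → ℝ} (hind : iIndepFun Z μ) (hZ : ∀ p, Measurable (Z p))
    (hlaw : ∀ p, μ.map (Z p) = κ.withDensity fun z => ENNReal.ofReal (q p z * w z))
    (hq : ∀ p, Measurable (q p)) (hq0 : ∀ p z, 0 < q p z) (hw : Measurable w)
    (hw0 : ∀ z, 0 ≤ w z) (hg : Measurable g) (hg0 : ∀ z, 0 ≤ g z)
    (hbal : MemLp (fun ω => ∑ p, g (Z p ω) / avgDensity q (Z p ω)) 2 μ)
    (hnai : MemLp (fun ω => ∑ p, g (Z p ω) / q p (Z p ω)) 2 μ) :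
    Var[fun ω => ∑ p, g (Z p ω) / avgDensity q (Z p ω); μ]
      ≤ Var[fun ω => ∑ p, g (Z p ω) / q p (Z p ω); μ] := by
  have hfbal : Measurable fun z => g z / avgDensity q z :=
    hg.div ((Finset.measurable_fun_sum _ fun p _ => hq p).div_const _)
  have hfnai : ∀ p, Measurable fun z => g z / q p z := fun p => hg.div (hq p)
  -- Nonnegativity lets each summand inherit square-integrability from the sum.
  have hbal_p := hbal.of_sum_of_nonneg (fun p => (hfbal.comp (hZ p)).aestronglyMeasurable)
    fun p ω => div_nonneg (hg0 _) (avgDensity_nonneg (fun p z => (hq0 p z).le) _)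
  have hnai_p := hnai.of_sum_of_nonneg (fun p => ((hfnai p).comp (hZ p)).aestronglyMeasurable)
    fun p ω => div_nonneg (hg0 _) (hq0 p _).le
  have := fun p => Measure.isProbabilityMeasure_map (μ := μ) (hZ p).aemeasurable
  have hlaw_memLp : ∀ p {f : E → ℝ}, Measurable f → MemLp (fun ω => f (Z p ω)) 2 μ →
      MemLp f 2 (μ.map (Z p)) := fun p _ hf =>
    (memLp_map_measure_iff hf.aestronglyMeasurable (hZ p).aemeasurable).2
  rw [hind.variance_sum_comp hZ (fun _ => hfbal) hbal_p, hind.variance_sum_comp hZ hfnai hnai_p]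
  exact sum_variance_div_avgDensity_le hlaw hq hq0 hw hw0
    (fun p => hlaw_memLp p hfbal (hbal_p p)) (fun p => hlaw_memLp p (hfnai p) (hnai_p p))

theorem balanced_ips_variance_le_naive_general {X Y Ω : Type*} [MeasurableSpace X]
    [MeasurableSpace Y] [MeasurableSpace Ω]
    (μ : Measure X) (ν : Measure Y)
    (μΩ : Measure Ω) [IsProbabilityMeasure μΩ]
    (J : ℕ) (nvec : Fin J → ℕ) (hn : 0 < ∑ j, nvec j)
    (Z : (j : Fin J) → Fin (nvec j) → Ω → X × Y)
    (Pd : X → ℝ) (h : X → Y → ℝ) (hj : Fin J → X → Y → ℝ) (havg : X → Y → ℝ)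
    (δ : X × Y → ℝ) (L : ℝ)
    (havg_def : ∀ x y, havg x y = (∑ j, (nvec j : ℝ) * hj j x y) / (∑ j, (nvec j : ℝ)))
    (hP_nonneg : ∀ x, 0 ≤ Pd x) (hP_meas : Measurable Pd)
    (hh_nonneg : ∀ x y, 0 ≤ h x y)
    (hh_meas : Measurable fun z : X × Y => h z.1 z.2)
    (hj_pos : ∀ j x y, 0 < hj j x y)
    (hj_meas : ∀ j, Measurable fun z : X × Y => hj j z.1 z.2)
    (hδ : ∀ z, δ z ∈ Set.Icc (0 : ℝ) L) (hδ_meas : Measurable δ)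
    (hZ_meas : ∀ j i, Measurable (Z j i))
    (hlaw : ∀ j i, Measure.map (Z j i) μΩ
      = (μ.prod ν).withDensity fun z => ENNReal.ofReal (hj j z.1 z.2 * Pd z.1))
    (hind : iIndepFun
      (fun p : (j : Fin J) × Fin (nvec j) => Z p.1 p.2) μΩ)
    (hL2_bal : MemLp (fun ω => (1 / (∑ j, (nvec j : ℝ))) * ∑ j, ∑ i,
        h (Z j i ω).1 (Z j i ω).2 / havg (Z j i ω).1 (Z j i ω).2 * δ (Z j i ω)) 2 μΩ)
    (hL2_naive : MemLp (fun ω => (1 / (∑ j, (nvec j : ℝ))) * ∑ j, ∑ i,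
        h (Z j i ω).1 (Z j i ω).2 / hj j (Z j i ω).1 (Z j i ω).2 * δ (Z j i ω)) 2 μΩ) :
    variance (fun ω => (1 / (∑ j, (nvec j : ℝ))) * ∑ j, ∑ i,
        h (Z j i ω).1 (Z j i ω).2 / havg (Z j i ω).1 (Z j i ω).2 * δ (Z j i ω)) μΩ
      ≤ variance (fun ω => (1 / (∑ j, (nvec j : ℝ))) * ∑ j, ∑ i,
        h (Z j i ω).1 (Z j i ω).2 / hj j (Z j i ω).1 (Z j i ω).2 * δ (Z j i ω)) μΩ := by
  set Zs : (j : Fin J) × Fin (nvec j) → Ω → X × Y := fun p => Z p.1 p.2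
  set q : (j : Fin J) × Fin (nvec j) → X × Y → ℝ := fun p z => hj p.1 z.1 z.2
  set g : X × Y → ℝ := fun z => h z.1 z.2 * δ z
  have hhavg : ∀ z : X × Y, havg z.1 z.2 = avgDensity q z := fun z => by
    have := avgDensity_sigma_fst (α := fun j => Fin (nvec j)) (fun j z => hj j z.1 z.2) z
    simp only [Fintype.card_fin] at this
    exact (havg_def z.1 z.2).trans this.symm
  have hbal : (fun ω => ∑ j, ∑ i,
      h (Z j i ω).1 (Z j i ω).2 / havg (Z j i ω).1 (Z j i ω).2 * δ (Z j i ω))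
      = fun ω => ∑ p, g (Zs p ω) / avgDensity q (Zs p ω) := by
    funext ω
    simp only [Fintype.sum_sigma, hhavg, div_mul_eq_mul_div, g, Zs]
  have hnaive : (fun ω => ∑ j, ∑ i,
      h (Z j i ω).1 (Z j i ω).2 / hj j (Z j i ω).1 (Z j i ω).2 * δ (Z j i ω))
      = fun ω => ∑ p, g (Zs p ω) / q p (Zs p ω) := by
    funext ω
    simp only [Fintype.sum_sigma, div_mul_eq_mul_div, g, q, Zs]
  have hn0 : (∑ j, (nvec j : ℝ)) ≠ 0 := by exact_mod_cast hn.ne'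
  have hunscale : ∀ {S : Ω → ℝ}, MemLp (fun ω => 1 / (∑ j, (nvec j : ℝ)) * S ω) 2 μΩ →
      MemLp S 2 μΩ := fun hS => by simpa [hn0] using hS.const_mul (∑ j, (nvec j : ℝ))
  rw [variance_const_mul, variance_const_mul]
  gcongr
  rw [hbal, hnaive]
  exact variance_sum_div_avgDensity_le (κ := μ.prod ν) (q := q) (w := fun z => Pd z.1) (g := g)
    hind (fun p => hZ_meas p.1 p.2) (fun p => hlaw p.1 p.2) (fun p => hj_meas p.1)
    (fun p _ => hj_pos p.1 _ _) (hP_meas.comp measurable_fst) (fun _ => hP_nonneg _)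
    (hh_meas.mul hδ_meas) (fun z => mul_nonneg (hh_nonneg _ _) (hδ z).1)
    (hbal ▸ hunscale hL2_bal) (hnaive ▸ hunscale hL2_naive)

/-- The balanced IPS estimator has variance no larger than the naive IPS estimator:
`Var(R̂_bal(h)) ≤ Var(R̂_naive(h))` over the multi-logger sampling distribution
`x_i^j ~ P`, `y_i^j ~ h_j(·|x_i^j)`, where `h_avg = (Σ_j n_j h_j)/n`. -/
theorem balanced_ips_variance_le_naive {X Y Ω : Type*} [MeasurableSpace X]
    [MeasurableSpace Y] [MeasurableSpace Ω]
    (μ : Measure X) (ν : Measure Y) [SigmaFinite μ] [SigmaFinite ν]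
    (μΩ : Measure Ω) [IsProbabilityMeasure μΩ]
    (J : ℕ) (nvec : Fin J → ℕ) (hn : 0 < ∑ j, nvec j)
    (Z : (j : Fin J) → Fin (nvec j) → Ω → X × Y)
    (Pd : X → ℝ) (h : X → Y → ℝ) (hj : Fin J → X → Y → ℝ) (havg : X → Y → ℝ)
    (δ : X × Y → ℝ) (L : ℝ)
    (havg_def : ∀ x y, havg x y = (∑ j, (nvec j : ℝ) * hj j x y) / (∑ j, (nvec j : ℝ)))
    (hP_nonneg : ∀ x, 0 ≤ Pd x) (hP_density : ∫ x, Pd x ∂μ = 1) (hP_meas : Measurable Pd)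
    (hh_nonneg : ∀ x y, 0 ≤ h x y) (hh_density : ∀ x, ∫ y, h x y ∂ν = 1)
    (hh_meas : Measurable fun z : X × Y => h z.1 z.2)
    (hj_pos : ∀ j x y, 0 < hj j x y) (hj_density : ∀ j x, ∫ y, hj j x y ∂ν = 1)
    (hj_meas : ∀ j, Measurable fun z : X × Y => hj j z.1 z.2)
    (hδ : ∀ z, δ z ∈ Set.Icc (0 : ℝ) L) (hδ_meas : Measurable δ)
    (hZ_meas : ∀ j i, Measurable (Z j i))
    (hlaw : ∀ j i, Measure.map (Z j i) μΩ
      = (μ.prod ν).withDensity fun z => ENNReal.ofReal (hj j z.1 z.2 * Pd z.1))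
    (hind : iIndepFun
      (fun p : (j : Fin J) × Fin (nvec j) => Z p.1 p.2) μΩ)
    (hL2_bal : MemLp (fun ω => (1 / (∑ j, (nvec j : ℝ))) * ∑ j, ∑ i,
        h (Z j i ω).1 (Z j i ω).2 / havg (Z j i ω).1 (Z j i ω).2 * δ (Z j i ω)) 2 μΩ)
    (hL2_naive : MemLp (fun ω => (1 / (∑ j, (nvec j : ℝ))) * ∑ j, ∑ i,
        h (Z j i ω).1 (Z j i ω).2 / hj j (Z j i ω).1 (Z j i ω).2 * δ (Z j i ω)) 2 μΩ) :
    variance (fun ω => (1 / (∑ j, (nvec j : ℝ))) * ∑ j, ∑ i,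
        h (Z j i ω).1 (Z j i ω).2 / havg (Z j i ω).1 (Z j i ω).2 * δ (Z j i ω)) μΩ
      ≤ variance (fun ω => (1 / (∑ j, (nvec j : ℝ))) * ∑ j, ∑ i,
        h (Z j i ω).1 (Z j i ω).2 / hj j (Z j i ω).1 (Z j i ω).2 * δ (Z j i ω)) μΩ :=
  balanced_ips_variance_le_naive_general μ ν μΩ J nvec hn Z Pd h hj havg δ L havg_def hP_nonneg
    hP_meas hh_nonneg hh_meas hj_pos hj_meas hδ hδ_meas hZ_meas hlaw hind hL2_bal hL2_naive
end
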